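/- Let a_1, …, a_k be nonnegative real numbers and S ≥ 0 a real number with S ≤ max_{1≤j≤k} a_j. For 1 ≤ j ≤ k write M_{j-1} = max_{1≤i<j} a_i (with M_0 = 0). Then ∑_{j=1}^{k} min((S − M_{j-1})_+, (a_j − M_{j-1})_+) = S, where x_+ = max(x,0). -/
import Mathlib

lemma key_minmax (S M b : ℝ) :
    min (max (S - M) 0) (max (b - M) 0) = min S (max b M) - min S M := by
  rcases le_total S M with h | h <;> rcases le_total b M with h2 | h2 <;>
    simp [max_def, min_def] <;> split_ifs <;> linarith

lemma aux_sum (a : ℕ → ℝ) (S : ℝ) (hS0 : 0 ≤ S) : ∀ k : ℕ,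
    ∑ j ∈ Finset.Icc 1 k,
      min (max (S - (Finset.Ico 1 j).fold max 0 a) 0)
          (max (a j - (Finset.Ico 1 j).fold max 0 a) 0)
      = min S ((Finset.Icc 1 k).fold max 0 a) := by
  intro k
  induction k with
  | zero => simp [hS0]
  | succ k ih =>
      have hnot : k + 1 ∉ Finset.Icc 1 k := by simp
      rw [show Finset.Icc 1 (k+1) = insert (k+1) (Finset.Icc 1 k) by
            ext x; simp; omega,
          Finset.sum_insert hnot, Finset.fold_insert hnot, ih,
          show Finset.Ico 1 (k+1) = Finset.Icc 1 k from Finset.Ico_add_one_right_eq_Icc 1 k,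
          key_minmax]
      ring

/-- Telescoping identity for truncated minima: if `0 ≤ S ≤ max_{1≤j≤k} a_j` with
nonnegative `a_j`, then `∑_{j=1}^k min((S − M_{j-1})₊, (a_j − M_{j-1})₊) = S`,
where `M_{j-1} = max_{1≤i<j} a_i` (empty max = 0). -/
theorem cluster_index_telescoping_min
    (k : ℕ) (a : ℕ → ℝ) (ha : ∀ j ∈ Finset.Icc 1 k, 0 ≤ a j)
    (S : ℝ) (hS0 : 0 ≤ S) (hS : S ≤ (Finset.Icc 1 k).fold max 0 a) :
    ∑ j ∈ Finset.Icc 1 k,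
      min (max (S - (Finset.Ico 1 j).fold max 0 a) 0)
          (max (a j - (Finset.Ico 1 j).fold max 0 a) 0) = S := by
  rw [aux_sum a S hS0 k, min_eq_left hS]
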